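/- arXiv:1301.0784 — 3 statements merged into one kernel-verified Lean document; each statement's English description precedes it below -/
import Mathlib

section
/- Let L be the line (path) on [n], I_L its binomial edge ideal, and g = x_1 y_n − x_n y_1. For every nonempty T ⊆ [n] such that P_T(L) is a minimal prime of I_L, one has g ∉ P_T(L). -/
open MvPolynomial CategoryTheory Opposite

noncomputable section

namespace BEIPaper

/-- The `x_i` variable of the polynomial ring `K[x_1,…,x_n,y_1,…,y_n]`,
which we realize as `MvPolynomial (σ ⊕ σ) K`, where `Sum.inl i ↦ x_i` and
`Sum.inr i ↦ y_i`. -/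
def xv (K : Type) [Field K] {σ : Type} (i : σ) : MvPolynomial (σ ⊕ σ) K :=
  X (Sum.inl i)

/-- The `y_i` variable. -/
def yv (K : Type) [Field K] {σ : Type} (i : σ) : MvPolynomial (σ ⊕ σ) K :=
  X (Sum.inr i)

/-- The binomial edge ideal of a graph `G` on the vertex set `[n]`:
generated by the binomials `x_i y_j - x_j y_i` for edges `{i, j}` with `i < j`. -/
def bei (K : Type) [Field K] {n : ℕ} (G : SimpleGraph (Fin n)) :
    Ideal (MvPolynomial (Fin n ⊕ Fin n) K) :=
  Ideal.span {f | ∃ i j : Fin n, i < j ∧ G.Adj i j ∧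
    f = xv K i * yv K j - xv K j * yv K i}

/-- The prime ideal `P_T(G)`: generated by `{x_i, y_i : i ∈ T}` together with the
binomial edge ideals of the complete graphs on the vertex sets of the connected
components of the induced subgraph of `G` on `[n] ∖ T` (equivalently, all binomials
`x_i y_j - x_j y_i` where `i < j` lie outside `T` in the same connected component). -/
def PT (K : Type) [Field K] {n : ℕ} (G : SimpleGraph (Fin n)) (T : Set (Fin n)) :
    Ideal (MvPolynomial (Fin n ⊕ Fin n) K) :=
  Ideal.span ((xv K '' T) ∪ (yv K '' T) ∪
    {f | ∃ i j : Fin n, ∃ (hi : i ∈ Tᶜ) (hj : j ∈ Tᶜ), i < j ∧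
      (G.induce Tᶜ).Reachable ⟨i, hi⟩ ⟨j, hj⟩ ∧
      f = xv K i * yv K j - xv K j * yv K i})

/-- `c(T)`: the number of connected components of the induced subgraph of `G`
on `[n] ∖ T`. -/
def ncomp {n : ℕ} (G : SimpleGraph (Fin n)) (T : Set (Fin n)) : ℕ :=
  Nat.card (G.induce Tᶜ).ConnectedComponent

/-- The graded (irrelevant) maximal ideal of a polynomial ring, generated by
all the variables. -/
def mIdeal (K : Type) [Field K] (σ : Type) : Ideal (MvPolynomial σ K) :=
  Ideal.span (Set.range X)

/-- The depth of a module `M` with respect to an ideal `I`: the supremum of lengths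
of `M`-regular sequences consisting of elements of `I`. -/
def depth {R : Type} [CommRing R] (I : Ideal R) (M : Type) [AddCommGroup M]
    [Module R M] : ℕ∞ :=
  sSup {k : ℕ∞ | ∃ rs : List R, (rs.length : ℕ∞) = k ∧ (∀ r ∈ rs, r ∈ I) ∧
    RingTheory.Sequence.IsRegular M rs}

/-- The (Krull) dimension of a module: the Krull dimension of `R` modulo the
annihilator of `M`. -/
def mdim (R : Type) [CommRing R] (M : Type) [AddCommGroup M] [Module R M] :
    WithBot ℕ∞ :=
  ringKrullDim (R ⧸ Module.annihilator R M)

/-- `M` is a Cohen-Macaulay `R`-module of dimension `d` (depth and dimension both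
being taken with respect to the given (maximal graded) ideal `I`). -/
def IsCMmodOfDim {R : Type} [CommRing R] (I : Ideal R) (M : Type) [AddCommGroup M]
    [Module R M] (d : ℕ) : Prop :=
  (depth I M : WithBot ℕ∞) = mdim R M ∧ mdim R M = (d : ℕ∞)

/-- The quotient `S/J` of a polynomial ring `S` by an ideal `J` is a Cohen-Macaulay
ring: its depth with respect to the graded maximal ideal equals its Krull dimension. -/
def IsCMQuot (K : Type) [Field K] {σ : Type} (J : Ideal (MvPolynomial σ K)) : Prop :=
  (depth (mIdeal K σ) (MvPolynomial σ K ⧸ J) : WithBot ℕ∞) =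
    ringKrullDim (MvPolynomial σ K ⧸ J)

/-- `S/I` is approximately Cohen-Macaulay: there is a homogeneous element `x` of
positive degree in the irrelevant ideal of `R = S/I` (i.e. the image of a homogeneous
polynomial `f` of positive degree) such that `R/x^m R = S/(I + (f^m))` is a
Cohen-Macaulay ring of dimension `dim R - 1` for all `m ≥ 1`. -/
def IsACM (K : Type) [Field K] {σ : Type} (I : Ideal (MvPolynomial σ K)) : Prop :=
  ∃ (d : ℕ) (f : MvPolynomial σ K), 0 < d ∧ f.IsHomogeneous d ∧
    ∀ m : ℕ, 1 ≤ m →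
      IsCMQuot K (I ⊔ Ideal.span {f ^ m}) ∧
      ringKrullDim (MvPolynomial σ K ⧸ (I ⊔ Ideal.span {f ^ m})) + 1 =
        ringKrullDim (MvPolynomial σ K ⧸ I)

/-- The Hilbert series of `S/I` (for a homogeneous ideal `I`), as a power series
over `ℤ`: the `m`-th coefficient is the `K`-dimension of the degree-`m` graded
component of `S/I`, i.e. of the image of the space of degree-`m` homogeneous
polynomials in `S/I`. -/
def hseries (K : Type) [Field K] {σ : Type} (I : Ideal (MvPolynomial σ K)) :
    PowerSeries ℤ :=
  PowerSeries.mk fun m =>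
    (Module.finrank K (Submodule.map (Ideal.Quotient.mkₐ K I).toLinearMap
      (homogeneousSubmodule σ K m)) : ℤ)

/-- The formal power series variable `t`. -/
def t : PowerSeries ℤ := PowerSeries.X

/-- The equidimensional part `U_S(I)` of (a minimal primary decomposition of) `I`:
the intersection of the primary components `I(p)` over the associated primes `p`
with `dim S/p = dim S/I`.  Any such `p` is a minimal prime of `I`, so its primary
component is independent of the decomposition and equals the saturation
`{x | ∃ s ∉ p, s * x ∈ I}`. -/
def USideal {R : Type} [CommRing R] (I : Ideal R) : Ideal R :=
  sInf {J | ∃ p ∈ associatedPrimes R (R ⧸ I),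
    ringKrullDim (R ⧸ p) = ringKrullDim (R ⧸ I) ∧
    J = Ideal.span {x | ∃ s ∉ p, s * x ∈ I}}

/-- `Ext_S^j(S/I, S)`, as an object of `ModuleCat S`.  The `i`-th module of
deficiency of `S/I` is `ω^i(S/I) = Ext_S^{2n-i}(S/I, S)`, i.e. `extSI K I (2*n - i)`. -/
def extSI (K : Type) [Field K] {σ : Type} (I : Ideal (MvPolynomial σ K)) (j : ℕ) :
    ModuleCat (MvPolynomial σ K) :=
  ((Ext (MvPolynomial σ K) (ModuleCat (MvPolynomial σ K)) j).obj
      (op (ModuleCat.of (MvPolynomial σ K) (MvPolynomial σ K ⧸ I)))).obj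
    (ModuleCat.of (MvPolynomial σ K) (MvPolynomial σ K))

/-- The line (path) graph on `[n]` (with `[n]` realized as `Fin n`), with edges
`{i, i+1}` for `1 ≤ i ≤ n-1`. -/
def lineG (n : ℕ) : SimpleGraph (Fin n) :=
  SimpleGraph.fromRel (fun a b => (b : ℕ) = (a : ℕ) + 1)

/-- The cycle of length `n` on `[n]` (with `[n]` realized as `Fin n`), with edges
`{i, i+1}` for `1 ≤ i ≤ n-1` together with `{1, n}`. -/
def cycleG (n : ℕ) : SimpleGraph (Fin n) :=
  SimpleGraph.fromRel (fun a b =>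
    (b : ℕ) = (a : ℕ) + 1 ∨ ((a : ℕ) = 0 ∧ (b : ℕ) = n - 1))

/-- The binomial `g = x_1 y_n - x_n y_1`. -/
def gElt (K : Type) [Field K] {n : ℕ} (hn : 0 < n) : MvPolynomial (Fin n ⊕ Fin n) K :=
  xv K ⟨0, hn⟩ * yv K ⟨n - 1, by omega⟩ - xv K ⟨n - 1, by omega⟩ * yv K ⟨0, hn⟩

/-- The `i`-th generator `x_2 x_3 ⋯ x_i y_{i+1} ⋯ y_{n-1}` (for `i = 1, …, n-1`)
of the monomial ideal `M`; the product ranges over the labels `p = 2, …, n-1`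
(`0`-indexed: `q = p - 1` with `1 ≤ q ≤ n-2`), taking `x_p` when `p ≤ i` and
`y_p` when `p > i`. -/
def mgen (K : Type) [Field K] (n : ℕ) (i : ℕ) : MvPolynomial (Fin n ⊕ Fin n) K :=
  ∏ q ∈ Finset.univ.filter (fun q : Fin n => 0 < (q : ℕ) ∧ (q : ℕ) < n - 1),
    (if (q : ℕ) + 1 ≤ i then xv K q else yv K q)

/-- The monomial ideal
`M = (x_2 x_3 ⋯ x_{n-1}, x_2 x_3 ⋯ x_{n-2} y_{n-1}, …, x_2 y_3 ⋯ y_{n-1}, y_2 y_3 ⋯ y_{n-1})`. -/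
def monoM (K : Type) [Field K] (n : ℕ) : Ideal (MvPolynomial (Fin n ⊕ Fin n) K) :=
  Ideal.span {f | ∃ i : ℕ, 1 ≤ i ∧ i ≤ n - 1 ∧ f = mgen K n i}

/-- The degree of a vertex, as the cardinality of its neighbor set. -/
def deg {n : ℕ} (G : SimpleGraph (Fin n)) (v : Fin n) : ℕ :=
  Nat.card (G.neighborSet v)

/-- A tree is 3-star like if no vertex has degree `≥ 4`, and either there is at most
one vertex of degree `3`, or there are exactly two vertices of degree `3` and they
are joined by an edge. -/
def ThreeStarLike {n : ℕ} (G : SimpleGraph (Fin n)) : Prop :=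
  (∀ v, deg G v ≤ 3) ∧
    ({v | deg G v = 3}.Subsingleton ∨
      ∃ a b : Fin n, a ≠ b ∧ G.Adj a b ∧ {v | deg G v = 3} = {a, b})

/-- The graph `G′` on `[n+1]` obtained from a graph `G` on `[n]` by attaching the
new edge `{v, n+1}` at the vertex `v` of `G`. -/
def extendG {n : ℕ} (G : SimpleGraph (Fin n)) (v : Fin n) : SimpleGraph (Fin (n + 1)) :=
  SimpleGraph.fromRel (fun a b =>
    (∃ (ha : a ≠ Fin.last n) (hb : b ≠ Fin.last n),
      G.Adj (a.castPred ha) (b.castPred hb)) ∨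
    (a = Fin.castSucc v ∧ b = Fin.last n))

/-- The inclusion `S = K[x_1,…,x_n,y_1,…,y_n] → S′ = K[x_1,…,x_{n+1},y_1,…,y_{n+1}]`. -/
def liftS (K : Type) [Field K] (n : ℕ) :
    MvPolynomial (Fin n ⊕ Fin n) K →ₐ[K] MvPolynomial (Fin (n + 1) ⊕ Fin (n + 1)) K :=
  rename (Sum.map Fin.castSucc Fin.castSucc)

/-! If `v ∈ T` has at most one neighbour `w`, the generic point of `V(P_T)` can be moved along a
line in the `(x_v, y_v)`-plane, away from `x_v = y_v = 0`, in the direction of `(x_w, y_w)`,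
staying inside `V(I_G)`. The kernel of this deformation is a prime containing `I_G`, strictly
inside `P_T`, so `P_T` is not minimal; hence both ends of the line lie outside `T`. On the other
hand, a vertex of `T` strictly between them separates `1` from `n` in `L - T`, and evaluating `x`
at the indicator of the component of `1` and `y` at that of `n` kills `P_T` but not `g`. -/

def edgeBinomial (K : Type) [Field K] {σ : Type} (i j : σ) : MvPolynomial (σ ⊕ σ) K :=
  xv K i * yv K j - xv K j * yv K i

lemma edgeBinomial_swap {K : Type} [Field K] {σ : Type} (i j : σ) :
    edgeBinomial K j i = -edgeBinomial K i j := by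
  simp only [edgeBinomial]
  ring

section Deform

variable {K : Type} [Field K] {σ : Type} [DecidableEq σ]

/-- The point of `V(P)` given by the residue classes of the variables, with `(x_v, y_v)`
replaced by `(t a, t b)` for a polynomial variable `t`. -/
def deform (P : Ideal (MvPolynomial (σ ⊕ σ) K)) (v : σ) (a b : MvPolynomial (σ ⊕ σ) K ⧸ P) :
    MvPolynomial (σ ⊕ σ) K →+* Polynomial (MvPolynomial (σ ⊕ σ) K ⧸ P) :=
  eval₂Hom (Polynomial.C.comp ((Ideal.Quotient.mk P).comp C))
    (Sum.elim
      (fun i => if i = v then Polynomial.C a * Polynomial.X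
        else Polynomial.C (Ideal.Quotient.mk P (xv K i)))
      (fun i => if i = v then Polynomial.C b * Polynomial.X
        else Polynomial.C (Ideal.Quotient.mk P (yv K i))))

variable {P : Ideal (MvPolynomial (σ ⊕ σ) K)} {v : σ} {a b : MvPolynomial (σ ⊕ σ) K ⧸ P}

lemma deform_xv (i : σ) : deform P v a b (xv K i) =
    if i = v then Polynomial.C a * Polynomial.X
    else Polynomial.C (Ideal.Quotient.mk P (xv K i)) := by
  simp [deform, xv]

lemma deform_yv (i : σ) : deform P v a b (yv K i) =
    if i = v then Polynomial.C b * Polynomial.X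
    else Polynomial.C (Ideal.Quotient.mk P (yv K i)) := by
  simp [deform, yv]

lemma evalRingHom_zero_comp_deform (hx : xv K v ∈ P) (hy : yv K v ∈ P) :
    (Polynomial.evalRingHom 0).comp (deform P v a b) = Ideal.Quotient.mk P := by
  refine MvPolynomial.ringHom_ext (fun r => by simp [deform]) ?_
  rintro (i | i)
  · change Polynomial.eval 0 (deform P v a b (xv K i)) = Ideal.Quotient.mk P (xv K i)
    rw [deform_xv]
    split_ifs with hi
    · subst hi
      simp [Ideal.Quotient.eq_zero_iff_mem.mpr hx]
    · simp
  · change Polynomial.eval 0 (deform P v a b (yv K i)) = Ideal.Quotient.mk P (yv K i)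
    rw [deform_yv]
    split_ifs with hi
    · subst hi
      simp [Ideal.Quotient.eq_zero_iff_mem.mpr hy]
    · simp

lemma ker_deform_le (hx : xv K v ∈ P) (hy : yv K v ∈ P) :
    RingHom.ker (deform P v a b) ≤ P := by
  intro f hf
  rw [← Ideal.Quotient.eq_zero_iff_mem, ← evalRingHom_zero_comp_deform hx hy,
    RingHom.comp_apply, RingHom.mem_ker.mp hf, map_zero]

lemma notMem_minimalPrimes_of_le_ker_deform {I : Ideal (MvPolynomial (σ ⊕ σ) K)}
    (hx : xv K v ∈ P) (hy : yv K v ∈ P) (ha : a ≠ 0) (hI : I ≤ RingHom.ker (deform P v a b)) :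
    P ∉ I.minimalPrimes := by
  intro hmin
  have := hmin.1.1
  have hle : P ≤ RingHom.ker (deform P v a b) :=
    hmin.2 ⟨RingHom.ker_isPrime _, hI⟩ (ker_deform_le hx hy)
  have hxv := hle hx
  rw [RingHom.mem_ker, deform_xv, if_pos rfl] at hxv
  exact ha (by simpa using hxv)

lemma deform_edgeBinomial_of_ne {i j : σ} (hi : i ≠ v) (hj : j ≠ v) :
    deform P v a b (edgeBinomial K i j) =
      Polynomial.C (Ideal.Quotient.mk P (edgeBinomial K i j)) := by
  simp [edgeBinomial, deform_xv, deform_yv, hi, hj]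

lemma deform_edgeBinomial_self {w : σ} (hw : w ≠ v)
    (hab : a * Ideal.Quotient.mk P (yv K w) = b * Ideal.Quotient.mk P (xv K w)) :
    deform P v a b (edgeBinomial K v w) = 0 := by
  have hC : Polynomial.C a * Polynomial.C (Ideal.Quotient.mk P (yv K w)) =
      Polynomial.C b * Polynomial.C (Ideal.Quotient.mk P (xv K w)) := by
    rw [← Polynomial.C_mul, ← Polynomial.C_mul, hab]
  simp only [edgeBinomial, map_sub, map_mul, deform_xv, deform_yv, if_true, if_neg hw]
  linear_combination Polynomial.X * hC

end Deform

section PrimeComponents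

variable {K : Type} [Field K] {n : ℕ} {G : SimpleGraph (Fin n)} {T : Set (Fin n)}

lemma xv_mem_PT {i : Fin n} (hi : i ∈ T) : xv K i ∈ PT K G T :=
  Ideal.subset_span (Or.inl (Or.inl ⟨i, hi, rfl⟩))

lemma yv_mem_PT {i : Fin n} (hi : i ∈ T) : yv K i ∈ PT K G T :=
  Ideal.subset_span (Or.inl (Or.inr ⟨i, hi, rfl⟩))

lemma edgeBinomial_mem_PT_of_reachable {i j : Fin n} (hi : i ∈ Tᶜ) (hj : j ∈ Tᶜ)
    (hr : (G.induce Tᶜ).Reachable ⟨i, hi⟩ ⟨j, hj⟩) : edgeBinomial K i j ∈ PT K G T := by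
  rcases lt_trichotomy i j with h | rfl | h
  · exact Ideal.subset_span (Or.inr ⟨i, j, hi, hj, h, hr, rfl⟩)
  · simp [edgeBinomial]
  · rw [← neg_neg (edgeBinomial K i j), ← edgeBinomial_swap]
    exact (PT K G T).neg_mem (Ideal.subset_span (Or.inr ⟨j, i, hj, hi, h, hr.symm, rfl⟩))

lemma edgeBinomial_mem_PT_of_adj {i j : Fin n} (hadj : G.Adj i j) :
    edgeBinomial K i j ∈ PT K G T := by
  by_cases hi : i ∈ T
  · exact (PT K G T).sub_mem (Ideal.mul_mem_right _ _ (xv_mem_PT hi))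
      (Ideal.mul_mem_left _ _ (yv_mem_PT hi))
  by_cases hj : j ∈ T
  · exact (PT K G T).sub_mem (Ideal.mul_mem_left _ _ (yv_mem_PT hj))
      (Ideal.mul_mem_right _ _ (xv_mem_PT hj))
  exact edgeBinomial_mem_PT_of_reachable hi hj (SimpleGraph.Adj.reachable hadj)

/-- The vertex set of the component of `i` in `G - T`; empty when `i ∈ T`. -/
def componentSet (G : SimpleGraph (Fin n)) (T : Set (Fin n)) (i : Fin n) : Set (Fin n) :=
  {k | ∃ (hi : i ∈ Tᶜ) (hk : k ∈ Tᶜ), (G.induce Tᶜ).Reachable ⟨i, hi⟩ ⟨k, hk⟩}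

lemma mem_componentSet_iff_of_reachable {i a b : Fin n} (ha : a ∈ Tᶜ) (hb : b ∈ Tᶜ)
    (hr : (G.induce Tᶜ).Reachable ⟨a, ha⟩ ⟨b, hb⟩) :
    a ∈ componentSet G T i ↔ b ∈ componentSet G T i :=
  ⟨fun ⟨hi, _, hia⟩ => ⟨hi, hb, hia.trans hr⟩, fun ⟨hi, _, hib⟩ => ⟨hi, ha, hib.trans hr.symm⟩⟩

open Classical in
def componentEval (K : Type) [Field K] (G : SimpleGraph (Fin n)) (T : Set (Fin n)) (i j : Fin n) :
    MvPolynomial (Fin n ⊕ Fin n) K →+* K :=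
  eval (Sum.elim ((componentSet G T i).indicator 1) ((componentSet G T j).indicator 1))

lemma PT_le_ker_componentEval (i j : Fin n) : PT K G T ≤ RingHom.ker (componentEval K G T i j) := by
  classical
  rw [PT, Ideal.span_le]
  rintro f ((⟨k, hk, rfl⟩ | ⟨k, hk, rfl⟩) | ⟨a, b, ha, hb, -, hr, rfl⟩)
  · simp [componentEval, xv, componentSet, hk]
  · simp [componentEval, yv, componentSet, hk]
  · simp [componentEval, xv, yv, Set.indicator_apply, mem_componentSet_iff_of_reachable ha hb hr]

lemma componentEval_edgeBinomial {i j : Fin n} (hi : i ∈ Tᶜ) (hj : j ∈ Tᶜ)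
    (hij : ¬ (G.induce Tᶜ).Reachable ⟨i, hi⟩ ⟨j, hj⟩) :
    componentEval K G T i j (edgeBinomial K i j) = 1 := by
  classical
  have hjj : j ∈ componentSet G T j := ⟨hj, hj, .refl _⟩
  have hii : i ∈ componentSet G T i := ⟨hi, hi, .refl _⟩
  have hji : j ∉ componentSet G T i := fun ⟨_, _, h⟩ => hij h
  simp [componentEval, edgeBinomial, xv, yv, Set.indicator_apply, hii, hjj, hji]

lemma edgeBinomial_notMem_PT_of_not_reachable {i j : Fin n} (hi : i ∈ Tᶜ) (hj : j ∈ Tᶜ)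
    (hij : ¬ (G.induce Tᶜ).Reachable ⟨i, hi⟩ ⟨j, hj⟩) : edgeBinomial K i j ∉ PT K G T := by
  intro h
  have := RingHom.mem_ker.mp (PT_le_ker_componentEval i j h)
  rw [componentEval_edgeBinomial hi hj hij] at this
  exact one_ne_zero this

lemma xv_notMem_PT {i : Fin n} (hi : i ∉ T) : xv K i ∉ PT K G T := by
  classical
  intro h
  have := RingHom.mem_ker.mp (PT_le_ker_componentEval i i h)
  simp [componentEval, xv, componentSet, hi] at this

theorem PT_notMem_minimalPrimes_of_subsingleton_neighborSet {v : Fin n} (hv : v ∈ T)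
    (hsub : (G.neighborSet v).Subsingleton) : PT K G T ∉ (bei K G).minimalPrimes := by
  obtain ⟨w, hw⟩ : ∃ w, ∀ u, G.Adj v u → u = w := by
    rcases (G.neighborSet v).eq_empty_or_nonempty with h | ⟨w, hw⟩
    · exact ⟨v, fun u hu => absurd hu (Set.eq_empty_iff_forall_notMem.mp h u)⟩
    · exact ⟨w, fun u hu => hsub hu hw⟩
  intro hmin
  have := hmin.1.1
  set P := PT K G T
  -- `(a, b)` must be proportional to the residue of `(x_w, y_w)` for `f_{vw}` to stay in the kernel.
  obtain ⟨a, b, ha, hab⟩ : ∃ a b : MvPolynomial (Fin n ⊕ Fin n) K ⧸ P, a ≠ 0 ∧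
      a * Ideal.Quotient.mk P (yv K w) = b * Ideal.Quotient.mk P (xv K w) := by
    by_cases hwT : w ∈ T
    · exact ⟨1, 0, one_ne_zero,
        by rw [Ideal.Quotient.eq_zero_iff_mem.mpr (yv_mem_PT hwT), mul_zero, zero_mul]⟩
    · exact ⟨_, _, mt Ideal.Quotient.eq_zero_iff_mem.mp (xv_notMem_PT hwT), mul_comm _ _⟩
  have hadj : ∀ i j, G.Adj i j → deform P v a b (edgeBinomial K i j) = 0 := by
    intro i j hij
    by_cases hi : i = v
    · subst hi
      exact deform_edgeBinomial_self (hw j hij ▸ hij.ne.symm) (hw j hij ▸ hab)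
    by_cases hj : j = v
    · subst hj
      rw [edgeBinomial_swap, map_neg,
        deform_edgeBinomial_self (hw i hij.symm ▸ hi) (hw i hij.symm ▸ hab), neg_zero]
    rw [deform_edgeBinomial_of_ne hi hj,
      Ideal.Quotient.eq_zero_iff_mem.mpr (edgeBinomial_mem_PT_of_adj hij), map_zero]
  refine notMem_minimalPrimes_of_le_ker_deform (b := b) (xv_mem_PT hv) (yv_mem_PT hv) ha ?_ hmin
  rw [bei, Ideal.span_le]
  rintro f ⟨i, j, -, hij, rfl⟩
  exact hadj i j hij

end PrimeComponents

section Line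

variable {n : ℕ}

lemma lineG_adj {a b : Fin n} : (lineG n).Adj a b ↔ (b : ℕ) = a + 1 ∨ (a : ℕ) = b + 1 := by
  rw [lineG, SimpleGraph.fromRel_adj]
  exact ⟨fun h => h.2, fun h => ⟨fun hab => by subst hab; omega, h⟩⟩

lemma lineG_neighborSet_subsingleton {v : Fin n} (hv : (v : ℕ) = 0 ∨ (v : ℕ) = n - 1) :
    ((lineG n).neighborSet v).Subsingleton := by
  intro u hu u' hu'
  have := u.isLt
  have := u'.isLt
  rw [SimpleGraph.mem_neighborSet, lineG_adj] at hu hu'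
  ext
  omega

lemma lt_of_reachable_induce_lineG {T : Set (Fin n)} {t : Fin n} (ht : t ∈ T)
    {a b : (Tᶜ : Set (Fin n))} (hab : ((lineG n).induce Tᶜ).Reachable a b)
    (ha : (a : ℕ) < t) : (b : ℕ) < t := by
  obtain ⟨p⟩ := hab
  induction p with
  | nil => exact ha
  | @cons u c _ huc _ ih =>
    apply ih
    have hct : (c : ℕ) ≠ t := fun h => c.2 (Fin.ext h ▸ ht)
    have huc' : (lineG n).Adj u c := huc
    rcases lineG_adj.mp huc' with h | h <;> omega

end Line

/-- Let `L` be the line (path) on `[n]`, `I_L` its binomial edge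
ideal, and `g = x_1 y_n − x_n y_1`.  For every nonempty `T ⊆ [n]` such that `P_T(L)`
is a minimal prime of `I_L`, one has `g ∉ P_T(L)`. -/
theorem statement8 (K : Type) [Field K] (n : ℕ) (hn : 0 < n) (T : Set (Fin n))
    (hT : T ≠ ∅) (hmin : PT K (lineG n) T ∈ (bei K (lineG n)).minimalPrimes) :
    gElt K hn ∉ PT K (lineG n) T := by
  have hend : ∀ v : Fin n, (v : ℕ) = 0 ∨ (v : ℕ) = n - 1 → v ∉ T := fun v hv hvT =>
    PT_notMem_minimalPrimes_of_subsingleton_neighborSet hvT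
      (lineG_neighborSet_subsingleton hv) hmin
  obtain ⟨t, ht⟩ := Set.nonempty_iff_ne_empty.mpr hT
  have ht0 : 0 < (t : ℕ) := Nat.pos_of_ne_zero fun h => hend t (Or.inl h) ht
  have htn : (t : ℕ) < n - 1 := by
    have := t.isLt
    have : (t : ℕ) ≠ n - 1 := fun h => hend t (Or.inr h) ht
    omega
  exact edgeBinomial_notMem_PT_of_not_reachable (hend ⟨0, hn⟩ (Or.inl rfl))
    (hend ⟨n - 1, by omega⟩ (Or.inr rfl))
    fun hr => absurd (lt_of_reachable_induce_lineG ht hr ht0) (Nat.not_lt.mpr htn.le)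

end BEIPaper
end
end

section
/- Let L be the line (path) on [n], I_L its binomial edge ideal, g = x_1 y_n − x_n y_1, and J_G̃ the binomial edge ideal of the complete graph on [n]. Then I_L = (I_L : g) ∩ J_G̃. -/
open MvPolynomial CategoryTheory Opposite

noncomputable section

namespace BEIPaper

/-! For a set `T` of interior vertices of `L`, the prime `P_T(L)` is the kernel of the monomial
map sending `x_i, y_i ↦ 0` for `i ∈ T` and otherwise `x_i ↦ s_c z_i`, `y_i ↦ t_c z_i`, where `c`
is the component of `i` in `L ∖ T`. These kernels cut out `I_L`: modulo `I_L` every polynomial is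
a combination of standard monomials (those not divisible by any `x_i y_{i+1}`), and a standard
monomial is determined by its image under the map for `T` = the interior vertices it misses.
Now `J_G̃ = P_∅(L)`, while for `T ≠ ∅` the vertices `1` and `n` lie in different components, so
`g ∉ P_T(L)` and `f g ∈ I_L` forces `f ∈ P_T(L)`. -/

section LineIdeal

variable {K : Type} [Field K] {n : ℕ}

lemma bei_mono {G H : SimpleGraph (Fin n)} (h : G ≤ H) : bei K G ≤ bei K H :=
  Ideal.span_mono fun _ ⟨i, j, hij, hadj, hf⟩ => ⟨i, j, hij, h hadj, hf⟩

lemma binomial_mem_bei_lineG {i j : Fin n} (h : (j : ℕ) = i + 1) :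
    xv K i * yv K j - xv K j * yv K i ∈ bei K (lineG n) :=
  Ideal.subset_span ⟨i, j, Fin.lt_def.2 (by omega),
    (SimpleGraph.fromRel_adj _ _ _).2 ⟨Fin.ne_of_val_ne (by omega), Or.inl h⟩, rfl⟩

def IsStandard (d : (Fin n ⊕ Fin n) →₀ ℕ) : Prop :=
  ∀ i j : Fin n, (j : ℕ) = i + 1 → d (Sum.inl i) = 0 ∨ d (Sum.inr j) = 0

lemma monomial_mem_bei_lineG_sup_restrictSupport (d : (Fin n ⊕ Fin n) →₀ ℕ) :
    monomial d (1 : K) ∈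
      (bei K (lineG n)).restrictScalars K ⊔ restrictSupport K {d | IsStandard d} := by
  -- each rewriting `x_i y_{i+1} ↦ x_{i+1} y_i` lowers `∑ i * d (y_i)` by one
  induction hN : Finsupp.weight (Sum.elim 0 fun i : Fin n => (i : ℕ)) d
    using Nat.strong_induction_on generalizing d with
  | _ N ih =>
  by_cases hd : IsStandard d
  · exact Submodule.mem_sup_right (by simpa using hd)
  obtain ⟨i, j, hij, hi, hj⟩ : ∃ i j : Fin n, (j : ℕ) = i + 1 ∧
      d (Sum.inl i) ≠ 0 ∧ d (Sum.inr j) ≠ 0 := by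
    simpa [IsStandard, not_or] using hd
  set e := d - (Finsupp.single (Sum.inl i) 1 + Finsupp.single (Sum.inr j) 1)
  have hd : d = e + (Finsupp.single (Sum.inl i) 1 + Finsupp.single (Sum.inr j) 1) := by
    refine (tsub_add_cancel_of_le fun v => ?_).symm
    rcases v with v | v <;> simp only [Finsupp.add_apply, Finsupp.single_apply] <;>
      split_ifs <;> simp_all <;> omega
  set d' := e + (Finsupp.single (Sum.inl j) 1 + Finsupp.single (Sum.inr i) 1)
  have hrewrite : monomial d (1 : K) =
      (xv K i * yv K j - xv K j * yv K i) * monomial e 1 + monomial d' 1 := by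
    simp only [xv, yv, X, monomial_mul, sub_mul, mul_one, hd, d', add_comm e]
    abel
  have hlt : Finsupp.weight (Sum.elim 0 fun i : Fin n => (i : ℕ)) d' < N := by
    simp only [← hN, hd, d', map_add, Finsupp.weight_single, Sum.elim_inl, Sum.elim_inr,
      Pi.zero_apply, smul_eq_mul, one_mul]
    omega
  rw [hrewrite]
  exact add_mem (Submodule.mem_sup_left
    (Ideal.mul_mem_right _ _ (binomial_mem_bei_lineG hij))) (ih _ hlt d' rfl)

lemma bei_lineG_sup_restrictSupport_eq_top :
    (bei K (lineG n)).restrictScalars K ⊔ restrictSupport K {d | IsStandard d} = ⊤ := by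
  rw [eq_top_iff]
  rintro f -
  induction f using MvPolynomial.induction_on' with
  | monomial d c =>
    simpa [smul_monomial] using
      Submodule.smul_mem _ c (monomial_mem_bei_lineG_sup_restrictSupport d)
  | add p q hp hq => exact add_mem hp hq

def componentIndex (T : Finset (Fin n)) (i : Fin n) : ℕ :=
  (T.filter (· < i)).card

lemma componentIndex_eq_of_succ {T : Finset (Fin n)} {i j : Fin n} (hi : i ∉ T)
    (h : (j : ℕ) = i + 1) : componentIndex T i = componentIndex T j := by
  unfold componentIndex
  congr 1
  refine Finset.filter_congr fun t ht => ?_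
  have : (t : ℕ) ≠ i := fun h => hi (Fin.ext h ▸ ht)
  simp only [Fin.lt_def]
  omega

lemma notMem_of_componentIndex_eq {T : Finset (Fin n)} {p q r : Fin n} (hpr : p ≤ r)
    (hrq : r < q) (h : componentIndex T p = componentIndex T q) : r ∉ T := by
  intro hr
  have hsub : T.filter (· < p) ⊆ T.filter (· < q) :=
    Finset.monotone_filter_right _ fun t _ (ht : t < p) => ht.trans_le (hpr.trans hrq.le)
  have heq := Finset.eq_of_subset_of_card_le hsub h.ge
  have : r ∈ T.filter (· < p) := heq ▸ Finset.mem_filter.2 ⟨hr, hrq⟩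
  exact (Finset.mem_filter.1 this).2.not_ge hpr

def vertex : Fin n ⊕ Fin n → Fin n :=
  Sum.elim id id

/-- The exponent of the image `s_c z_i` of `x_i`, resp. `t_c z_i` of `y_i`, where `c` is the
component of `i` in `L ∖ T`, written `s_c = X (inl (inl c))`, `t_c = X (inl (inr c))`,
`z_i = X (inr i)`. -/
def componentExponent (T : Finset (Fin n)) (v : Fin n ⊕ Fin n) : ((ℕ ⊕ ℕ) ⊕ Fin n) →₀ ℕ :=
  Finsupp.single (Sum.inl (Sum.map (componentIndex T) (componentIndex T) v)) 1 +
    Finsupp.single (Sum.inr (vertex v)) 1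

def componentMap (K : Type) [Field K] (T : Finset (Fin n)) :
    MvPolynomial (Fin n ⊕ Fin n) K →ₐ[K] MvPolynomial ((ℕ ⊕ ℕ) ⊕ Fin n) K :=
  aeval fun v => if vertex v ∈ T then 0 else monomial (componentExponent T v) 1

lemma componentMap_X (T : Finset (Fin n)) (v : Fin n ⊕ Fin n) :
    componentMap K T (X v) = if vertex v ∈ T then 0 else
      X (Sum.inl (Sum.map (componentIndex T) (componentIndex T) v)) * X (Sum.inr (vertex v)) := by
  rw [componentMap, aeval_X, componentExponent, ← one_mul (1 : K), ← monomial_mul]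
  rfl

def Avoids (T : Finset (Fin n)) (d : (Fin n ⊕ Fin n) →₀ ℕ) : Prop :=
  ∀ v, vertex v ∈ T → d v = 0

lemma componentMap_monomial_of_avoids {T : Finset (Fin n)} {d : (Fin n ⊕ Fin n) →₀ ℕ}
    (h : Avoids T d) (c : K) :
    componentMap K T (monomial d c) = monomial (Finsupp.weight (componentExponent T) d) c := by
  rw [componentMap, aeval_monomial, Finsupp.weight_apply, monomial_finsupp_sum_index,
    algebraMap_eq]
  congr 1
  refine Finset.prod_congr rfl fun v hv => ?_
  dsimp only
  rw [if_neg fun hT => Finsupp.mem_support_iff.1 hv (h v hT), monomial_pow, one_pow]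

lemma componentMap_monomial_of_not_avoids {T : Finset (Fin n)} {d : (Fin n ⊕ Fin n) →₀ ℕ}
    (h : ¬ Avoids T d) (c : K) : componentMap K T (monomial d c) = 0 := by
  obtain ⟨v, hvT, hv⟩ : ∃ v, vertex v ∈ T ∧ d v ≠ 0 := by
    by_contra! h'
    exact h h'
  rw [componentMap, aeval_monomial, Finsupp.prod,
    Finset.prod_eq_zero (Finsupp.mem_support_iff.2 hv) (by rw [if_pos hvT, zero_pow hv]),
    mul_zero]

lemma weight_componentExponent_inr (T : Finset (Fin n)) (d : (Fin n ⊕ Fin n) →₀ ℕ) (i : Fin n) :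
    Finsupp.weight (componentExponent T) d (Sum.inr i) = d (Sum.inl i) + d (Sum.inr i) := by
  simp [Finsupp.weight_eq_sum, componentExponent, Finsupp.single_apply, vertex,
    Fintype.sum_sum_type]

lemma weight_componentExponent_inl_inl (T : Finset (Fin n)) (d : (Fin n ⊕ Fin n) →₀ ℕ) (c : ℕ) :
    Finsupp.weight (componentExponent T) d (Sum.inl (Sum.inl c)) =
      ∑ i with componentIndex T i = c, d (Sum.inl i) := by
  simp [Finsupp.weight_eq_sum, componentExponent, Finsupp.single_apply, vertex,
    Fintype.sum_sum_type, Finset.sum_filter, eq_comm]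

lemma componentMap_binomial {T : Finset (Fin n)} {i j : Fin n}
    (h : i ∉ T → j ∉ T → componentIndex T i = componentIndex T j) :
    componentMap K T (xv K i * yv K j - xv K j * yv K i) = 0 := by
  by_cases hi : i ∈ T
  · simp [xv, yv, componentMap_X, vertex, hi]
  by_cases hj : j ∈ T
  · simp [xv, yv, componentMap_X, vertex, hj]
  simp only [xv, yv, map_sub, map_mul, componentMap_X, vertex, Sum.elim_inl, Sum.elim_inr, id,
    Sum.map_inl, Sum.map_inr, hi, hj, if_false, h hi hj]
  ring

lemma bei_lineG_le_ker_componentMap (T : Finset (Fin n)) :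
    bei K (lineG n) ≤ RingHom.ker (componentMap K T) := by
  refine Ideal.span_le.2 ?_
  rintro _ ⟨i, j, hij, hadj, rfl⟩
  have hsucc : (j : ℕ) = i + 1 := by
    simp only [lineG, SimpleGraph.fromRel_adj] at hadj
    have : (i : ℕ) < j := hij
    omega
  exact componentMap_binomial fun hi _ => componentIndex_eq_of_succ hi hsucc

lemma bei_top_le_ker_componentMap_empty :
    bei K (⊤ : SimpleGraph (Fin n)) ≤ RingHom.ker (componentMap K (∅ : Finset (Fin n))) := by
  refine Ideal.span_le.2 ?_
  rintro _ ⟨i, j, -, -, rfl⟩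
  exact componentMap_binomial fun _ _ => by simp [componentIndex]

lemma componentMap_gElt_ne_zero (hn : 0 < n) {T : Finset (Fin n)}
    (hT : ∀ t ∈ T, 0 < (t : ℕ) ∧ (t : ℕ) < n - 1) (hne : T.Nonempty) :
    componentMap K T (gElt K hn) ≠ 0 := by
  have hfirst : (⟨0, hn⟩ : Fin n) ∉ T := fun h => (hT _ h).1.ne rfl
  have hlast : (⟨n - 1, by omega⟩ : Fin n) ∉ T := fun h => (hT _ h).2.ne rfl
  have hc_first : componentIndex T ⟨0, hn⟩ = 0 := by
    simp [componentIndex, Fin.lt_def]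
  have hc_last : componentIndex T ⟨n - 1, by omega⟩ ≠ 0 := by
    obtain ⟨t, ht⟩ := hne
    exact Finset.card_ne_zero.2 ⟨t, Finset.mem_filter.2 ⟨ht, Fin.lt_def.2 (hT t ht).2⟩⟩
  -- at `s_0 = 1`, `s_c = 0` for `c ≠ 0` and all other variables `1`, the image of `g` is `1 - 0`
  intro h
  have := congrArg (eval (Sum.elim (Sum.elim (fun c => if c = 0 then (1 : K) else 0) 1) 1)) h
  simp [gElt, xv, yv, componentMap_X, vertex, hfirst, hlast, hc_first, hc_last] at this

lemma IsStandard.inr_eq_zero {d : (Fin n ⊕ Fin n) →₀ ℕ} (hd : IsStandard d) {i q : Fin n}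
    (hiq : i < q) (hi : d (Sum.inl i) ≠ 0)
    (hfull : ∀ r : Fin n, i < r → r < q → d (Sum.inl r) + d (Sum.inr r) ≠ 0) :
    d (Sum.inr q) = 0 := by
  obtain ⟨k, hk⟩ : ∃ k, (q : ℕ) = i + k + 1 := ⟨q - i - 1, by omega⟩
  induction k generalizing q with
  | zero => exact (hd i q hk).resolve_left hi
  | succ k ih =>
    let p : Fin n := ⟨i + k + 1, by omega⟩
    have hpq : p < q := Fin.lt_def.2 (by simp only [p]; omega)
    have hp : d (Sum.inr p) = 0 :=
      ih (Fin.lt_def.2 (by simp only [p]; omega)) (fun r h1 h2 => hfull r h1 (h2.trans hpq)) rfl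
    have hp' : d (Sum.inl p) ≠ 0 := by
      have := hfull p (Fin.lt_def.2 (by simp only [p]; omega)) hpq
      omega
    exact (hd p q (by simp only [p]; omega)).resolve_left hp'

section Fiber

variable {T : Finset (Fin n)} {d d₀ : (Fin n ⊕ Fin n) →₀ ℕ}

/-- In the component of `q`, `d` has no `x_i` with `i < q`: otherwise `IsStandard.inr_eq_zero`
removes `y_q`, and `x_q` takes the full degree of `d` at `q`. So that component has smaller
`x`-degree in `d` than in `d₀`. -/
lemma inl_not_lt_of_weight_eq (hd : IsStandard d) (hav : Avoids T d) (hav₀ : Avoids T d₀)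
    (hfull : ∀ i : Fin n, 0 < (i : ℕ) → (i : ℕ) < n - 1 → i ∉ T →
      d (Sum.inl i) + d (Sum.inr i) ≠ 0)
    (hw : Finsupp.weight (componentExponent T) d = Finsupp.weight (componentExponent T) d₀)
    {q : Fin n} (habove : ∀ i, q < i → d (Sum.inl i) = d₀ (Sum.inl i)) :
    ¬ d (Sum.inl q) < d₀ (Sum.inl q) := by
  intro hlt
  have hdeg (i : Fin n) : d (Sum.inl i) + d (Sum.inr i) = d₀ (Sum.inl i) + d₀ (Sum.inr i) := by
    rw [← weight_componentExponent_inr, ← weight_componentExponent_inr, hw]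
  have hle : ∀ i ∈ Finset.univ.filter (componentIndex T · = componentIndex T q),
      d (Sum.inl i) ≤ d₀ (Sum.inl i) := by
    intro i hi
    rcases lt_trichotomy i q with hiq | rfl | hqi
    · by_cases hiT : i ∈ T
      · rw [hav (Sum.inl i) hiT, hav₀ (Sum.inl i) hiT]
      by_contra! hpos
      have hnot (r : Fin n) (h1 : i ≤ r) (h2 : r < q) : r ∉ T :=
        notMem_of_componentIndex_eq h1 h2 (Finset.mem_filter.1 hi).2
      have hyq : d (Sum.inr q) = 0 :=
        hd.inr_eq_zero hiq (by omega) fun r h1 h2 =>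
          hfull r (by simp only [Fin.lt_def] at h1; omega) (by simp only [Fin.lt_def] at h2; omega)
            (hnot r h1.le h2)
      have := hdeg q
      omega
    · exact hlt.le
    · exact (habove i hqi).le
  have hsum := Finset.sum_lt_sum hle ⟨q, Finset.mem_filter.2 ⟨Finset.mem_univ q, rfl⟩, hlt⟩
  rw [← weight_componentExponent_inl_inl, ← weight_componentExponent_inl_inl, hw] at hsum
  exact hsum.false

lemma eq_of_weight_componentExponent_eq (hd : IsStandard d) (hd₀ : IsStandard d₀)
    (hav : Avoids T d) (hav₀ : Avoids T d₀)
    (hfull : ∀ i : Fin n, 0 < (i : ℕ) → (i : ℕ) < n - 1 → i ∉ T →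
      d₀ (Sum.inl i) + d₀ (Sum.inr i) ≠ 0)
    (hw : Finsupp.weight (componentExponent T) d = Finsupp.weight (componentExponent T) d₀) :
    d = d₀ := by
  have hdeg (i : Fin n) : d (Sum.inl i) + d (Sum.inr i) = d₀ (Sum.inl i) + d₀ (Sum.inr i) := by
    rw [← weight_componentExponent_inr, ← weight_componentExponent_inr, hw]
  have hinl : ∀ i, d (Sum.inl i) = d₀ (Sum.inl i) := by
    by_contra! hne
    obtain ⟨q, hq, hmax⟩ :=
      (Finset.univ.filter fun i => d (Sum.inl i) ≠ d₀ (Sum.inl i)).exists_max_image id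
        (hne.imp fun i hi => Finset.mem_filter.2 ⟨Finset.mem_univ i, hi⟩)
    have habove : ∀ i, q < i → d (Sum.inl i) = d₀ (Sum.inl i) := fun i hqi => by
      by_contra h
      exact (hmax i (Finset.mem_filter.2 ⟨Finset.mem_univ i, h⟩)).not_gt hqi
    rcases (Finset.mem_filter.1 hq).2.lt_or_gt with hlt | hgt
    · exact inl_not_lt_of_weight_eq hd hav hav₀ (fun i h1 h2 hi => hdeg i ▸ hfull i h1 h2 hi)
        hw habove hlt
    · exact inl_not_lt_of_weight_eq hd₀ hav₀ hav hfull hw.symm (fun i hqi => (habove i hqi).symm)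
        hgt
  ext (i | i)
  · exact hinl i
  · have := hdeg i
    have := hinl i
    omega

end Fiber

lemma eq_zero_of_forall_componentMap_eq_zero {v : MvPolynomial (Fin n ⊕ Fin n) K}
    (hv : v ∈ restrictSupport K {d | IsStandard d})
    (h : ∀ T : Finset (Fin n), (∀ t ∈ T, 0 < (t : ℕ) ∧ (t : ℕ) < n - 1) →
      componentMap K T v = 0) :
    v = 0 := by
  ext d₀
  rw [coeff_zero]
  by_contra hne
  have hd₀ : IsStandard d₀ := hv (mem_support_iff.2 hne)
  -- `d₀` is the only standard exponent in its fibre of `componentMap K T`, for `T` the interior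
  -- vertices missing from `d₀`
  set T := Finset.univ.filter fun i : Fin n =>
    0 < (i : ℕ) ∧ (i : ℕ) < n - 1 ∧ d₀ (Sum.inl i) + d₀ (Sum.inr i) = 0
  have hT : ∀ t ∈ T, 0 < (t : ℕ) ∧ (t : ℕ) < n - 1 := fun t ht =>
    ⟨(Finset.mem_filter.1 ht).2.1, (Finset.mem_filter.1 ht).2.2.1⟩
  have hav₀ : Avoids T d₀ := by
    rintro (i | i) hi <;>
    · have := (Finset.mem_filter.1 hi).2.2.2
      simp only [vertex, Sum.elim_inl, Sum.elim_inr, id] at this ⊢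
      omega
  have hfull : ∀ i : Fin n, 0 < (i : ℕ) → (i : ℕ) < n - 1 → i ∉ T →
      d₀ (Sum.inl i) + d₀ (Sum.inr i) ≠ 0 := fun i h1 h2 hi h0 =>
    hi (Finset.mem_filter.2 ⟨Finset.mem_univ i, h1, h2, h0⟩)
  have hcoeff : coeff (Finsupp.weight (componentExponent T) d₀) (componentMap K T v) =
      coeff d₀ v := by
    conv_lhs => rw [v.as_sum, map_sum, coeff_sum]
    refine (Finset.sum_eq_single d₀ (fun d hd hdd₀ => ?_)
      fun h => (h (mem_support_iff.2 hne)).elim).trans ?_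
    · by_cases hav : Avoids T d
      · rw [componentMap_monomial_of_avoids hav, coeff_monomial, if_neg fun hw =>
          hdd₀ (eq_of_weight_componentExponent_eq (hv hd) hd₀ hav hav₀ hfull hw)]
      · rw [componentMap_monomial_of_not_avoids hav, coeff_zero]
    · rw [componentMap_monomial_of_avoids hav₀, coeff_monomial, if_pos rfl]
  rw [h T hT, coeff_zero] at hcoeff
  exact hne hcoeff.symm

lemma mem_bei_lineG_of_forall_componentMap_eq_zero {f : MvPolynomial (Fin n ⊕ Fin n) K}
    (h : ∀ T : Finset (Fin n), (∀ t ∈ T, 0 < (t : ℕ) ∧ (t : ℕ) < n - 1) →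
      componentMap K T f = 0) :
    f ∈ bei K (lineG n) := by
  have hf : f ∈ (bei K (lineG n)).restrictScalars K ⊔ restrictSupport K {d | IsStandard d} :=
    bei_lineG_sup_restrictSupport_eq_top (K := K) ▸ Submodule.mem_top
  obtain ⟨g, hg, v, hv, rfl⟩ := Submodule.mem_sup.1 hf
  have hker (T : Finset (Fin n)) : componentMap K T g = 0 := bei_lineG_le_ker_componentMap T hg
  rwa [eq_zero_of_forall_componentMap_eq_zero hv fun T hT => by
    simpa [hker T] using h T hT, add_zero]

end LineIdeal

/-- Let `L` be the line (path) on `[n]`, `I_L` its binomial edge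
ideal, `g = x_1 y_n − x_n y_1`, and `J_G̃` the binomial edge ideal of the complete
graph on `[n]`.  Then `I_L = (I_L : g) ∩ J_G̃`. -/
theorem statement9 (K : Type) [Field K] (n : ℕ) (hn : 0 < n) :
    bei K (lineG n) =
      (bei K (lineG n)).colon (Ideal.span {gElt K hn}) ⊓
        bei K (⊤ : SimpleGraph (Fin n)) := by
  refine le_antisymm (le_inf Ideal.le_colon (bei_mono le_top)) fun f ⟨hfg, hfJ⟩ => ?_
  refine mem_bei_lineG_of_forall_componentMap_eq_zero fun T hT => ?_
  rcases T.eq_empty_or_nonempty with rfl | hne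
  · exact bei_top_le_ker_componentMap_empty hfJ
  · have hfg' := bei_lineG_le_ker_componentMap T (Ideal.mem_colon_span_singleton.1 hfg)
    rw [RingHom.mem_ker, map_mul] at hfg'
    exact (mul_eq_zero.1 hfg').resolve_right (componentMap_gElt_ne_zero hn hT hne)

end BEIPaper
end
end

section
/- Let L be the line (path) on [n], I_L its binomial edge ideal, g = x_1 y_n − x_n y_1, and J_G̃ the binomial edge ideal of the complete graph on [n]. Then I_L : g = I_L : J_G̃. -/
/-!
Modulo `I_L` a monomial can only trade `x_{p+1} y_p` for `x_p y_{p+1}`, so its class is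
determined by its degree at each position and by the number of `x`s in each block between
consecutive gaps (positions of degree `0`): `S/I_L` is the monoid algebra `K[Q]` of the quotient `Q`
of the exponent monoid by these invariants. Multiplication by `x_1 y_n` is injective on `Q`, and
when the class of `μ` has a gap strictly between `1` and `n`, the classes `ν` with
`ν x_n y_1 = μ x_1 y_n` carry more `x`s before that gap. So if `f g ∈ I_L`, induction on that
number shows that `f` vanishes on every class with such an inner gap; on the other classes each
`x_i y_j - x_j y_i` acts as zero.
-/

open MvPolynomial CategoryTheory Opposite

noncomputable section

namespace BEIPaper

section Exponents

variable {n : ℕ}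

/-- Positions are read in `ℕ`, with exponent `0` at every position `p ≥ n`; so `n` is always a
gap, and `xDegUpTo μ q` is the total `x`-degree of `μ` once `n ≤ q + 1`. -/
def xDeg (μ : (Fin n ⊕ Fin n) →₀ ℕ) (p : ℕ) : ℕ :=
  if h : p < n then μ (Sum.inl ⟨p, h⟩) else 0

def yDeg (μ : (Fin n ⊕ Fin n) →₀ ℕ) (p : ℕ) : ℕ :=
  if h : p < n then μ (Sum.inr ⟨p, h⟩) else 0

def posDeg (μ : (Fin n ⊕ Fin n) →₀ ℕ) (p : ℕ) : ℕ :=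
  xDeg μ p + yDeg μ p

def xDegUpTo (μ : (Fin n ⊕ Fin n) →₀ ℕ) (q : ℕ) : ℕ :=
  ∑ p ∈ Finset.range (q + 1), xDeg μ p

def exy (i j : Fin n) : (Fin n ⊕ Fin n) →₀ ℕ :=
  Finsupp.single (Sum.inl i) 1 + Finsupp.single (Sum.inr j) 1

variable (μ ν : (Fin n ⊕ Fin n) →₀ ℕ)

@[simp] lemma xDeg_add (p : ℕ) : xDeg (μ + ν) p = xDeg μ p + xDeg ν p := by
  unfold xDeg; split <;> simp

@[simp] lemma yDeg_add (p : ℕ) : yDeg (μ + ν) p = yDeg μ p + yDeg ν p := by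
  unfold yDeg; split <;> simp

@[simp] lemma posDeg_add (p : ℕ) : posDeg (μ + ν) p = posDeg μ p + posDeg ν p := by
  simp only [posDeg, xDeg_add, yDeg_add]; ring

@[simp] lemma xDegUpTo_add (q : ℕ) : xDegUpTo (μ + ν) q = xDegUpTo μ q + xDegUpTo ν q := by
  simp only [xDegUpTo, xDeg_add, Finset.sum_add_distrib]

lemma xDeg_le_posDeg (p : ℕ) : xDeg μ p ≤ posDeg μ p := Nat.le_add_right _ _

lemma xDeg_of_le {p : ℕ} (h : n ≤ p) : xDeg μ p = 0 := by
  simp [xDeg, Nat.not_lt.mpr h]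

lemma posDeg_of_le {p : ℕ} (h : n ≤ p) : posDeg μ p = 0 := by
  simp [posDeg, xDeg, yDeg, Nat.not_lt.mpr h]

lemma xDegUpTo_succ (q : ℕ) : xDegUpTo μ (q + 1) = xDegUpTo μ q + xDeg μ (q + 1) :=
  Finset.sum_range_succ _ _

lemma xDegUpTo_zero : xDegUpTo μ 0 = xDeg μ 0 := by simp [xDegUpTo]

lemma xDegUpTo_mono {q q' : ℕ} (h : q ≤ q') : xDegUpTo μ q ≤ xDegUpTo μ q' :=
  Finset.sum_le_sum_of_subset (Finset.range_subset_range.2 (by omega))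

lemma xDegUpTo_eq_of_le {q : ℕ} (h : n ≤ q + 1) : xDegUpTo μ q = xDegUpTo μ n := by
  have key {a b : ℕ} (ha : n ≤ a + 1) (hab : a ≤ b) : xDegUpTo μ a = xDegUpTo μ b :=
    Finset.sum_subset (Finset.range_subset_range.2 (by omega)) fun p hp hpa =>
      xDeg_of_le μ (by simp at hp hpa; omega)
  rcases le_total q n with hqn | hqn
  · exact key h hqn
  · exact (key (by omega) hqn).symm

@[simp] lemma xDeg_exy (i j : Fin n) (p : ℕ) : xDeg (exy i j) p = if p = i then 1 else 0 := by
  unfold xDeg exy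
  split_ifs with h h' h' <;> simp_all [Fin.ext_iff, eq_comm]

@[simp] lemma yDeg_exy (i j : Fin n) (p : ℕ) : yDeg (exy i j) p = if p = j then 1 else 0 := by
  unfold yDeg exy
  split_ifs with h h' h' <;> simp_all [Fin.ext_iff, eq_comm]

@[simp] lemma posDeg_exy (i j : Fin n) (p : ℕ) :
    posDeg (exy i j) p = (if p = i then 1 else 0) + if p = j then 1 else 0 := by
  simp [posDeg]

@[simp] lemma xDegUpTo_exy (i j : Fin n) (q : ℕ) :
    xDegUpTo (exy i j) q = if (i : ℕ) ≤ q then 1 else 0 := by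
  simp [xDegUpTo, Finset.sum_ite_eq']

def xWeight (μ : (Fin n ⊕ Fin n) →₀ ℕ) : ℕ :=
  ∑ p ∈ Finset.range n, p * xDeg μ p

lemma xWeight_add : xWeight (μ + ν) = xWeight μ + xWeight ν := by
  simp only [xWeight, xDeg_add, mul_add, Finset.sum_add_distrib]

lemma xWeight_exy (i j : Fin n) : xWeight (exy i j) = i := by
  simp [xWeight, Finset.sum_ite_eq']

end Exponents

section LineCon

variable {n : ℕ}

/-- The invariants of the moves `x_{p+1} y_p ↦ x_p y_{p+1}`; by `ker_toLineAlg` they determine the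
class of a monomial modulo `I_L`. -/
def lineCon (n : ℕ) : AddCon ((Fin n ⊕ Fin n) →₀ ℕ) where
  r μ ν := (∀ p, posDeg μ p = posDeg ν p) ∧
    ∀ q, posDeg μ q = 0 → xDegUpTo μ q = xDegUpTo ν q
  iseqv :=
    { refl := fun _ => ⟨fun _ => rfl, fun _ _ => rfl⟩
      symm := fun ⟨hc, hA⟩ => ⟨fun p => (hc p).symm, fun q hq => (hA q (by rwa [hc])).symm⟩
      trans := fun ⟨hc, hA⟩ ⟨hc', hA'⟩ =>
        ⟨fun p => (hc p).trans (hc' p), fun q hq => (hA q hq).trans (hA' q (by rwa [← hc]))⟩ }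
  add' := by
    rintro μ ν μ' ν' ⟨hc, hA⟩ ⟨hc', hA'⟩
    refine ⟨fun p => by simp [hc p, hc' p], fun q hq => ?_⟩
    simp only [posDeg_add, Nat.add_eq_zero_iff] at hq
    simp [hA q hq.1, hA' q hq.2]

abbrev LineQuot (n : ℕ) := (lineCon n).Quotient

lemma lineCon_add_exy_swap {μ : (Fin n ⊕ Fin n) →₀ ℕ} {i j : Fin n} (hij : i < j)
    (hμ : ∀ q, (i : ℕ) < q → q < j → posDeg μ q ≠ 0) :
    lineCon n (μ + exy i j) (μ + exy j i) := by
  refine ⟨fun p => by simp only [posDeg_add, posDeg_exy]; ring, fun q hq => ?_⟩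
  have hij' : (i : ℕ) < j := hij
  simp only [posDeg_add, posDeg_exy, Nat.add_eq_zero_iff, ite_eq_right_iff] at hq
  obtain ⟨hq, hqi, hqj⟩ := hq
  have := hμ q
  simp only [xDegUpTo_add, xDegUpTo_exy]
  split_ifs <;> omega

def IsLeftNormal (μ : (Fin n ⊕ Fin n) →₀ ℕ) : Prop :=
  ∀ p, xDeg μ (p + 1) ≠ 0 → yDeg μ p = 0

/-- In a left-normal exponent, a `y` at position `p` forbids any `x` up to the next gap. -/
lemma IsLeftNormal.exists_gap_xDegUpTo_eq {μ : (Fin n ⊕ Fin n) →₀ ℕ}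
    (hμ : IsLeftNormal μ) {p : ℕ} (hp : yDeg μ p ≠ 0) :
    ∃ r, p < r ∧ posDeg μ r = 0 ∧ xDegUpTo μ r = xDegUpTo μ p := by
  have hex : ∃ r, p < r ∧ posDeg μ r = 0 :=
    ⟨max (p + 1) n, by omega, posDeg_of_le μ (by omega)⟩
  set r := Nat.find hex
  have hr := Nat.find_spec hex
  have hnogap : ∀ t, p < t → t < r → posDeg μ t ≠ 0 := fun t hpt htr h0 =>
    Nat.find_min hex htr ⟨hpt, h0⟩
  have hx : ∀ t, p + 1 ≤ t → t ≤ r → xDeg μ t = 0 := by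
    intro t ht
    induction t, ht using Nat.le_induction with
    | base => exact fun _ => by_contra fun h => hp (hμ p h)
    | succ t hpt ih =>
      intro htr
      have hy : yDeg μ t ≠ 0 := by
        have := hnogap t (by omega) (by omega)
        simp only [posDeg, ih (by omega), zero_add] at this
        exact this
      exact by_contra fun h => hy (hμ t h)
  refine ⟨r, hr.1, hr.2, ?_⟩
  have hA : ∀ t, p ≤ t → t ≤ r → xDegUpTo μ t = xDegUpTo μ p := by
    intro t ht
    induction t, ht using Nat.le_induction with
    | base => exact fun _ => rfl
    | succ t hpt ih =>
      intro htr
      rw [xDegUpTo_succ, ih (by omega), hx (t + 1) (by omega) htr, add_zero]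
  exact hA r hr.1.le le_rfl

lemma IsLeftNormal.not_xDeg_lt {μ ν : (Fin n ⊕ Fin n) →₀ ℕ} (hμ : IsLeftNormal μ)
    (h : lineCon n μ ν) {p : ℕ} (hbelow : ∀ t < p, xDeg μ t = xDeg ν t) :
    ¬ xDeg μ p < xDeg ν p := by
  intro hlt
  have hy : yDeg μ p ≠ 0 := by
    have := h.1 p
    have := xDeg_le_posDeg ν p
    unfold posDeg at *
    omega
  obtain ⟨r, hpr, hgap, hAr⟩ := hμ.exists_gap_xDegUpTo_eq hy
  have hAp : xDegUpTo μ p < xDegUpTo ν p := by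
    have hsum : ∑ t ∈ Finset.range p, xDeg μ t = ∑ t ∈ Finset.range p, xDeg ν t :=
      Finset.sum_congr rfl fun t ht => hbelow t (Finset.mem_range.1 ht)
    rw [xDegUpTo, xDegUpTo, Finset.sum_range_succ, Finset.sum_range_succ, hsum]
    omega
  have := xDegUpTo_mono ν hpr.le
  have := h.2 r hgap
  omega

lemma IsLeftNormal.eq_of_lineCon {μ ν : (Fin n ⊕ Fin n) →₀ ℕ} (hμ : IsLeftNormal μ)
    (hν : IsLeftNormal ν) (h : lineCon n μ ν) : μ = ν := by
  have hx : ∀ p, xDeg μ p = xDeg ν p := by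
    by_contra! hne
    obtain ⟨p, hp, hbelow⟩ :
        ∃ p, xDeg μ p ≠ xDeg ν p ∧ ∀ t < p, xDeg μ t = xDeg ν t :=
      ⟨Nat.find hne, Nat.find_spec hne, fun t ht => not_not.1 (Nat.find_min hne ht)⟩
    rcases hp.lt_or_gt with hlt | hlt
    · exact hμ.not_xDeg_lt h hbelow hlt
    · exact hν.not_xDeg_lt ((lineCon n).symm h) (fun t ht => (hbelow t ht).symm) hlt
  ext (i | i)
  · simpa [xDeg] using hx i
  · have := h.1 i
    simp only [posDeg, hx, add_right_inj] at this
    simpa [yDeg] using this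

end LineCon

section Polynomials

variable (K : Type) [Field K] {n : ℕ}

lemma xv_mul_yv (i j : Fin n) : xv K i * yv K j = monomial (exy i j) 1 := by
  rw [xv, yv, X, X, monomial_mul, one_mul, exy]

lemma lineG_adj_of_lt {i j : Fin n} (hij : i < j) (hadj : (lineG n).Adj i j) :
    (j : ℕ) = i + 1 := by
  rw [lineG, SimpleGraph.fromRel_adj] at hadj
  have : (i : ℕ) < j := hij
  omega

lemma monomial_add_exy_sub_mem_bei (τ : (Fin n ⊕ Fin n) →₀ ℕ) {i j : Fin n}
    (hij : (j : ℕ) = i + 1) :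
    monomial (τ + exy i j) (1 : K) - monomial (τ + exy j i) 1 ∈ bei K (lineG n) := by
  have hgen : xv K i * yv K j - xv K j * yv K i ∈ bei K (lineG n) := by
    refine Ideal.subset_span ⟨i, j, Fin.lt_def.2 (by omega), ?_, rfl⟩
    rw [lineG, SimpleGraph.fromRel_adj]
    exact ⟨fun h => by rw [h] at hij; omega, Or.inl hij⟩
  convert Ideal.mul_mem_left _ (monomial τ 1) hgen using 1
  rw [xv_mul_yv, xv_mul_yv, mul_sub, monomial_mul, monomial_mul, one_mul]

/-- Moving an `x` one step to the left lowers `xWeight`; a non-left-normal monomial admits such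
a move. -/
lemma exists_isLeftNormal_sub_mem_bei (μ : (Fin n ⊕ Fin n) →₀ ℕ) :
    ∃ ν, IsLeftNormal ν ∧ monomial μ (1 : K) - monomial ν 1 ∈ bei K (lineG n) := by
  induction hw : xWeight μ using Nat.strong_induction_on generalizing μ with
  | _ w ih =>
  by_cases hμ : IsLeftNormal μ
  · exact ⟨μ, hμ, by rw [sub_self]; exact zero_mem _⟩
  obtain ⟨p, hx, hy⟩ : ∃ p, xDeg μ (p + 1) ≠ 0 ∧ yDeg μ p ≠ 0 := by
    simpa [IsLeftNormal] using hμ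
  have hp : p + 1 < n := by
    by_contra h
    exact hx (xDeg_of_le μ (by omega))
  set i : Fin n := ⟨p, by omega⟩
  set j : Fin n := ⟨p + 1, hp⟩
  have hle : exy j i ≤ μ := by
    rw [Finsupp.le_def]
    rintro (k | k) <;>
      simp only [exy, Finsupp.add_apply, Finsupp.single_apply, Sum.inl.injEq, Sum.inr.injEq,
        reduceCtorEq, if_false, add_zero, zero_add] <;>
      split_ifs with h <;> try exact Nat.zero_le _
    · subst h; simpa [xDeg, hp, Nat.one_le_iff_ne_zero] using hx
    · subst h; simpa [yDeg, show p < n by omega, Nat.one_le_iff_ne_zero] using hy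
  obtain ⟨τ, hτ⟩ : ∃ τ, μ = τ + exy j i :=
    ⟨μ - exy j i, (tsub_add_cancel_of_le hle).symm⟩
  have hlt : xWeight (τ + exy i j) < w := by
    simp only [← hw, hτ, xWeight_add, xWeight_exy, i, j]
    omega
  obtain ⟨ν, hν, hmem⟩ := ih _ hlt (τ + exy i j) rfl
  refine ⟨ν, hν, ?_⟩
  rw [← sub_add_sub_cancel _ (monomial (τ + exy i j) 1), hτ, ← neg_sub]
  exact add_mem (neg_mem (monomial_add_exy_sub_mem_bei K τ rfl)) hmem

end Polynomials

section LineAlgebra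

open AddMonoidAlgebra

variable (K : Type) [Field K] (n : ℕ)

def toLineAlg : MvPolynomial (Fin n ⊕ Fin n) K →+* AddMonoidAlgebra K (LineQuot n) :=
  mapDomainRingHom K (lineCon n).mk'

variable {K n}

@[simp] lemma toLineAlg_monomial (μ : (Fin n ⊕ Fin n) →₀ ℕ) (c : K) :
    toLineAlg K n (monomial μ c) = single (μ : LineQuot n) c := by
  rw [toLineAlg, mapDomainRingHom_apply, ← single_eq_monomial, mapDomain_single]
  rfl

lemma bei_le_ker_toLineAlg : bei K (lineG n) ≤ RingHom.ker (toLineAlg K n) := by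
  rw [bei, Ideal.span_le]
  rintro _ ⟨i, j, hij, hadj, rfl⟩
  have hswap := lineCon_add_exy_swap (μ := 0) hij
    (by have := lineG_adj_of_lt hij hadj; omega)
  rw [zero_add, zero_add, ← AddCon.eq] at hswap
  rw [SetLike.mem_coe, RingHom.mem_ker, xv_mul_yv, xv_mul_yv, map_sub, toLineAlg_monomial,
    toLineAlg_monomial, hswap, sub_self]

lemma lineCon_of_sub_mem_bei {μ ν : (Fin n ⊕ Fin n) →₀ ℕ}
    (h : monomial μ (1 : K) - monomial ν 1 ∈ bei K (lineG n)) : lineCon n μ ν := by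
  have := bei_le_ker_toLineAlg h
  rwa [RingHom.mem_ker, map_sub, toLineAlg_monomial, toLineAlg_monomial, sub_eq_zero,
    single_left_inj one_ne_zero, AddCon.eq] at this

/-- Both monomials reduce to left-normal ones, which are equal since they are `lineCon`-related. -/
lemma monomial_sub_mem_bei_of_lineCon {μ ν : (Fin n ⊕ Fin n) →₀ ℕ} (h : lineCon n μ ν) :
    monomial μ (1 : K) - monomial ν 1 ∈ bei K (lineG n) := by
  obtain ⟨μ', hμ', hμμ'⟩ := exists_isLeftNormal_sub_mem_bei K μ
  obtain ⟨ν', hν', hνν'⟩ := exists_isLeftNormal_sub_mem_bei K ν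
  have : μ' = ν' := hμ'.eq_of_lineCon hν' <| (lineCon n).trans
    ((lineCon n).symm (lineCon_of_sub_mem_bei hμμ'))
    ((lineCon n).trans h (lineCon_of_sub_mem_bei hνν'))
  subst this
  rw [← sub_sub_sub_cancel_right _ _ (monomial μ' 1)]
  exact sub_mem hμμ' hνν'

theorem ker_toLineAlg : RingHom.ker (toLineAlg K n) = bei K (lineG n) := by
  refine le_antisymm (fun f hf => ?_) bei_le_ker_toLineAlg
  set s := Function.surjInv (lineCon n).mk'_surjective
  have key : ∀ f, f - mapDomain s (toLineAlg K n f) ∈ bei K (lineG n) := by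
    intro f
    induction f using MvPolynomial.induction_on' with
    | monomial μ c =>
      have hs : lineCon n μ (s μ) :=
        (lineCon n).symm ((lineCon n).eq.1 (Function.surjInv_eq (lineCon n).mk'_surjective _))
      rw [toLineAlg_monomial, mapDomain_single, single_eq_monomial]
      convert Ideal.mul_mem_left _ (C c) (monomial_sub_mem_bei_of_lineCon hs) using 1
      rw [mul_sub, C_mul_monomial, C_mul_monomial, mul_one]
    | add p q hp hq =>
      rw [map_add, mapDomain_add, add_sub_add_comm]
      exact add_mem hp hq
  simpa [RingHom.mem_ker.1 hf] using key f

end LineAlgebra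

section EndBinomial

open AddMonoidAlgebra

lemma coeff_mul_single_one_eq_sum {R Q : Type*} [Semiring R] [AddMonoid Q]
    [DecidableEq Q] (F : AddMonoidAlgebra R Q) (a z : Q) :
    (F * single a 1).coeff z = F.coeff.sum fun b r => if b + a = z then r else 0 := by
  simp [AddMonoidAlgebra.coeff_mul]

variable {m : ℕ}

lemma lineCon_of_lineCon_add_exy_zero_last {μ ν : (Fin (m + 1) ⊕ Fin (m + 1)) →₀ ℕ}
    (h : lineCon (m + 1) (μ + exy 0 (Fin.last m)) (ν + exy 0 (Fin.last m))) :
    lineCon (m + 1) μ ν := by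
  have hc : ∀ p, posDeg μ p = posDeg ν p := fun p => by
    have := h.1 p
    simp only [posDeg_add] at this
    omega
  refine ⟨hc, fun q hq => ?_⟩
  rcases Nat.eq_zero_or_pos q with rfl | hq0
  · have := xDeg_le_posDeg μ 0
    have := xDeg_le_posDeg ν 0
    have := hc 0
    simp only [xDegUpTo_zero]
    omega
  rcases lt_or_ge q m with hqm | hqm
  · simpa using h.2 q (by simp [hq, hq0.ne', hqm.ne])
  · rw [xDegUpTo_eq_of_le μ (by omega), xDegUpTo_eq_of_le ν (by omega)]
    simpa using h.2 (m + 1) (posDeg_of_le _ le_rfl)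

lemma posDeg_eq_zero_and_lt_of_lineCon_add_exy {μ ν : (Fin (m + 1) ⊕ Fin (m + 1)) →₀ ℕ}
    (h : lineCon (m + 1) (ν + exy (Fin.last m) 0) (μ + exy 0 (Fin.last m)))
    {q : ℕ} (hq0 : 0 < q) (hqm : q < m) (hq : posDeg μ q = 0) :
    posDeg ν q = 0 ∧
      xDegUpTo ν (m + 1) - xDegUpTo ν q < xDegUpTo μ (m + 1) - xDegUpTo μ q := by
  have hνq : posDeg ν q = 0 := by
    have := h.1 q
    simp only [posDeg_add, posDeg_exy, Fin.val_last, Fin.val_zero] at this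
    split_ifs at this <;> omega
  have hAq := h.2 q (by simp [hνq, hq0.ne', hqm.ne])
  have hAn := h.2 (m + 1) (posDeg_of_le _ le_rfl)
  have := xDegUpTo_mono ν (show q ≤ m + 1 by omega)
  simp [Nat.not_le.2 hqm] at hAq hAn
  exact ⟨hνq, by omega⟩

variable {K : Type} [Field K] {F : AddMonoidAlgebra K (LineQuot (m + 1))}

/-- The coefficient of `μ x_1 y_n` in `F x_1 y_n` is `F μ`, as adding `x_1 y_n` is injective on
classes, while in `F x_n y_1` it only involves classes `ν` with more `x`s up to `q` than `μ`;
induct on the number of `x`s after `q`. -/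
lemma coeff_eq_zero_of_posDeg_eq_zero
    (hF : F * single (exy 0 (Fin.last m) : LineQuot (m + 1)) 1 =
      F * single (exy (Fin.last m) 0 : LineQuot (m + 1)) 1)
    {μ : (Fin (m + 1) ⊕ Fin (m + 1)) →₀ ℕ} {q : ℕ} (hq0 : 0 < q) (hqm : q < m)
    (hq : posDeg μ q = 0) : F.coeff μ = 0 := by
  classical
  induction hk : xDegUpTo μ (m + 1) - xDegUpTo μ q using Nat.strong_induction_on
    generalizing μ with
  | _ k ih =>
  have hleft : (F * single (exy 0 (Fin.last m) : LineQuot (m + 1)) 1).coeff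
      ↑(μ + exy 0 (Fin.last m)) = F.coeff μ := by
    rw [coeff_mul_single_eq_coeff_mul (μ : LineQuot (m + 1)), mul_one]
    intro b _
    induction b using AddCon.induction_on with
    | H ν =>
      rw [← AddCon.coe_add, AddCon.eq, AddCon.eq]
      exact ⟨lineCon_of_lineCon_add_exy_zero_last,
        fun h => (lineCon (m + 1)).add h (AddCon.refl _ _)⟩
  have hright : (F * single (exy (Fin.last m) 0 : LineQuot (m + 1)) 1).coeff
      ↑(μ + exy 0 (Fin.last m)) = 0 := by
    rw [coeff_mul_single_one_eq_sum]
    refine Finset.sum_eq_zero fun b _ => ?_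
    induction b using AddCon.induction_on with
    | H ν =>
      dsimp only
      split_ifs with h
      · rw [← AddCon.coe_add, AddCon.eq] at h
        obtain ⟨hνq, hlt⟩ := posDeg_eq_zero_and_lt_of_lineCon_add_exy h hq0 hqm hq
        exact ih _ (hk ▸ hlt) hνq rfl
      · rfl
  rw [← hleft, hF, hright]

lemma mul_single_exy_eq_of_lt
    (hF : F * single (exy 0 (Fin.last m) : LineQuot (m + 1)) 1 =
      F * single (exy (Fin.last m) 0 : LineQuot (m + 1)) 1)
    {i j : Fin (m + 1)} (hij : i < j) :
    F * single (exy i j : LineQuot (m + 1)) 1 =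
      F * single (exy j i : LineQuot (m + 1)) 1 := by
  classical
  ext z
  rw [coeff_mul_single_one_eq_sum, coeff_mul_single_one_eq_sum]
  refine Finsupp.sum_congr fun b _ => ?_
  induction b using AddCon.induction_on with
  | H ν =>
    by_cases hgap : ∃ q, 0 < q ∧ q < m ∧ posDeg ν q = 0
    · obtain ⟨q, hq0, hqm, hq⟩ := hgap
      simp [coeff_eq_zero_of_posDeg_eq_zero hF hq0 hqm hq]
    · have hswap := lineCon_add_exy_swap hij fun q hiq hqj hq =>
        hgap ⟨q, by omega, by have := j.is_le; omega, hq⟩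
      rw [← AddCon.coe_add, ← AddCon.coe_add, (lineCon (m + 1)).eq.2 hswap]

end EndBinomial

section Colon

variable {K : Type} [Field K] {n : ℕ}

theorem mul_mem_bei_of_mul_gElt_mem (hn : 0 < n) {f : MvPolynomial (Fin n ⊕ Fin n) K}
    (hf : f * gElt K hn ∈ bei K (lineG n)) {i j : Fin n} (hij : i < j) :
    f * (xv K i * yv K j - xv K j * yv K i) ∈ bei K (lineG n) := by
  obtain ⟨m, rfl⟩ := Nat.exists_eq_add_one_of_ne_zero hn.ne'
  have hg : gElt K hn = monomial (exy 0 (Fin.last m)) 1 - monomial (exy (Fin.last m) 0) 1 := by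
    rw [gElt, xv_mul_yv, xv_mul_yv]
    rfl
  rw [← ker_toLineAlg, RingHom.mem_ker] at hf ⊢
  rw [hg, map_mul, map_sub, toLineAlg_monomial, toLineAlg_monomial, mul_sub, sub_eq_zero] at hf
  rw [xv_mul_yv, xv_mul_yv, map_mul, map_sub, toLineAlg_monomial, toLineAlg_monomial, mul_sub,
    sub_eq_zero]
  exact mul_single_exy_eq_of_lt hf hij

lemma gElt_mem_bei_top (hn : 0 < n) : gElt K hn ∈ bei K (⊤ : SimpleGraph (Fin n)) := by
  rcases (show n = 1 ∨ 1 < n by omega) with rfl | hn1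
  · simp [gElt]
  · refine Ideal.subset_span
      ⟨⟨0, hn⟩, ⟨n - 1, by omega⟩, Fin.lt_def.2 (by simp; omega), ?_, rfl⟩
    simp [Fin.ext_iff]
    omega

end Colon

/-- Let `L` be the line (path) on `[n]`, `I_L` its binomial edge
ideal, `g = x_1 y_n − x_n y_1`, and `J_G̃` the binomial edge ideal of the complete
graph on `[n]`.  Then `I_L : g = I_L : J_G̃`. -/
theorem statement11 (K : Type) [Field K] (n : ℕ) (hn : 0 < n) :
    (bei K (lineG n)).colon (Ideal.span {gElt K hn}) =
      (bei K (lineG n)).colon (bei K (⊤ : SimpleGraph (Fin n))) := by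
  refine le_antisymm (fun f hf => ?_) ?_
  · rw [Ideal.mem_colon_span_singleton] at hf
    unfold bei
    rw [Ideal.colon_span, Submodule.mem_colon]
    rintro _ ⟨i, j, hij, -, rfl⟩
    exact mul_mem_bei_of_mul_gElt_mem hn hf hij
  · exact Submodule.colon_mono le_rfl
      ((Ideal.span_singleton_le_iff_mem _).2 (gElt_mem_bei_top hn))

end BEIPaper
end
end
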